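/- arXiv:2309.13642 — 7 statements merged into one kernel-verified Lean document; each statement's English description precedes it below -/
import Mathlib

section
/- Let R be a *-ring and let a ∈ R be both group invertible and Moore–Penrose invertible. Then a is an SEP element if and only if a²a*a# is a projection. -/
/-!
Both generalized inverses are defined by equations, so the argument runs in any monoid with
involution, and it rests on the uniqueness of the Moore–Penrose inverse: it suffices to check that
first `a#` and then `a*` satisfy its four equations. Write `p = a²a*a#`. Since `aa†` is a projection
with `aa† p = p`, self-adjointness of `p` gives `p aa† = p`; cancelling `a` by `a#` and then `aa*`
by `(a†)*a†`, which inverts it on the range of `a`, leaves `a# aa† = a#`. Hence `aa# = aa†` is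
self-adjoint and `a† = a#`. Once `a† = a#`, the same cancellations turn `p² = p` into
`a*aa* = a*`, so `a*` is a Moore–Penrose inverse of `a` as well.
-/

structure IsMoorePenroseInverse {R : Type*} [Mul R] [Star R] (a x : R) : Prop where
  mul_inv_mul : a * x * a = a
  inv_mul_inv : x * a * x = x
  isSelfAdjoint_mul_inv : IsSelfAdjoint (a * x)
  isSelfAdjoint_inv_mul : IsSelfAdjoint (x * a)

structure IsGroupInverse {R : Type*} [Mul R] (a g : R) : Prop where
  mul_inv_mul : a * g * a = a
  inv_mul_inv : g * a * g = g
  commute : Commute a g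

namespace IsMoorePenroseInverse

variable {R : Type*} [Monoid R] [StarMul R] {a x y : R}

theorem star_mul_mul_inv (hx : IsMoorePenroseInverse a x) : star a * a * x = star a := by
  conv_rhs => rw [← hx.mul_inv_mul, star_mul, hx.isSelfAdjoint_mul_inv.star_eq]
  rw [mul_assoc]

theorem inv_mul_mul_star (hx : IsMoorePenroseInverse a x) : x * a * star a = star a := by
  conv_rhs => rw [← hx.mul_inv_mul, mul_assoc, star_mul, hx.isSelfAdjoint_inv_mul.star_eq]

theorem star_inv_mul_inv_mul_mul_star (hx : IsMoorePenroseInverse a x) :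
    star x * x * a * star a = a * x := by
  rw [mul_assoc (star x), mul_assoc (star x), hx.inv_mul_mul_star, ← star_mul,
    hx.isSelfAdjoint_mul_inv.star_eq]

theorem unique (hx : IsMoorePenroseInverse a x) (hy : IsMoorePenroseInverse a y) : x = y :=
  calc x = x * star (a * x) := by
        rw [hx.isSelfAdjoint_mul_inv.star_eq, ← mul_assoc, hx.inv_mul_inv]
    _ = x * (star x * (star a * a * y)) := by rw [hy.star_mul_mul_inv, star_mul]
    _ = x * star (a * x) * a * y := by simp only [star_mul, mul_assoc]
    _ = x * a * y := by rw [hx.isSelfAdjoint_mul_inv.star_eq, ← mul_assoc, hx.inv_mul_inv]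
    _ = x * a * star a * star y * y := by
      rw [mul_assoc (x * a) (star a), ← star_mul, hy.isSelfAdjoint_inv_mul.star_eq,
        mul_assoc (x * a), hy.inv_mul_inv]
    _ = y := by
      rw [hx.inv_mul_mul_star, ← star_mul, hy.isSelfAdjoint_inv_mul.star_eq, hy.inv_mul_inv]

theorem isStarProjection_mul_inv (hx : IsMoorePenroseInverse a x) : IsStarProjection (a * x) where
  isIdempotentElem := by rw [IsIdempotentElem, ← mul_assoc, hx.mul_inv_mul]
  isSelfAdjoint := hx.isSelfAdjoint_mul_inv

end IsMoorePenroseInverse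

namespace IsGroupInverse

variable {R : Type*} [Monoid R] {a g x : R}

theorem inv_mul_mul_self (hg : IsGroupInverse a g) : g * a * a = a := by
  rw [← hg.commute.eq, hg.mul_inv_mul]

theorem mul_inv_mul_inv (hg : IsGroupInverse a g) : a * g * g = g := by
  rw [hg.commute.eq, hg.inv_mul_inv]

theorem mul_self_mul_inv (hg : IsGroupInverse a g) : a * a * g = a := by
  rw [mul_assoc, hg.commute.eq, ← mul_assoc, hg.mul_inv_mul]

variable [StarMul R]

theorem isMoorePenroseInverse (hg : IsGroupInverse a g) (h : IsSelfAdjoint (a * g)) :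
    IsMoorePenroseInverse a g where
  mul_inv_mul := hg.mul_inv_mul
  inv_mul_inv := hg.inv_mul_inv
  isSelfAdjoint_mul_inv := h
  isSelfAdjoint_inv_mul := hg.commute.eq ▸ h

theorem eq_of_isSelfAdjoint (hg : IsGroupInverse a g) (hx : IsMoorePenroseInverse a x)
    (hp : IsSelfAdjoint (a * a * star a * g)) : x = g := by
  have hxp : a * x * (a * a * star a * g) = a * a * star a * g := by
    simp only [← mul_assoc, hx.mul_inv_mul]
  have hpx : a * a * star a * g * (a * x) = a * a * star a * g := by
    simpa only [star_mul, hp.star_eq, hx.isSelfAdjoint_mul_inv.star_eq] using congrArg star hxp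
  have h₁ : a * star a * g * (a * x) = a * star a * g := by
    simpa only [← mul_assoc, hg.inv_mul_mul_self] using congrArg (g * ·) hpx
  have hxg : a * x * g = g := by
    conv_lhs =>
      rw [← hg.mul_inv_mul_inv, ← mul_assoc, ← mul_assoc, hx.mul_inv_mul, hg.mul_inv_mul_inv]
  have h₂ : g * (a * x) = g := by
    simpa only [← mul_assoc, hx.star_inv_mul_inv_mul_mul_star, hxg] using
      congrArg (star x * x * ·) h₁
  have hag : a * g = a * x := by rw [← h₂, ← mul_assoc, ← mul_assoc, hg.mul_inv_mul]
  exact hx.unique (hg.isMoorePenroseInverse (hag ▸ hx.isSelfAdjoint_mul_inv))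

theorem isMoorePenroseInverse_star (hg : IsGroupInverse a g) (hmp : IsMoorePenroseInverse a g)
    (hp : IsIdempotentElem (a * a * star a * g)) : IsMoorePenroseInverse a (star a) := by
  have h₁ : a * star a * g * (a * a * star a * g) = a * star a * g := by
    simpa only [← mul_assoc, hg.inv_mul_mul_self] using congrArg (g * ·) hp.eq
  have h₂ : star a * (g * a * a) * star a * g = star a * g := by
    simpa only [← mul_assoc, hmp.inv_mul_mul_star] using congrArg (g * ·) h₁
  rw [hg.inv_mul_mul_self] at h₂
  have hga : star a * g * a = star a := by
    rw [mul_assoc, ← hg.commute.eq, ← mul_assoc, hmp.star_mul_mul_inv]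
  have hstar : star a * a * star a = star a :=
    calc star a * a * star a = star a * a * (star a * g * a) := by rw [hga]
      _ = star a * a * star a * g * a := by simp only [mul_assoc]
      _ = star a := by rw [h₂, hga]
  have hself : a * star a * a = a := by
    simpa only [star_mul, star_star, mul_assoc] using congrArg star hstar
  exact ⟨hself, hstar, .mul_star_self a, .star_mul_self a⟩

theorem isStarProjection_mul_mul_star_mul_iff (hg : IsGroupInverse a g)
    (hx : IsMoorePenroseInverse a x) :
    IsStarProjection (a * a * star a * g) ↔ star a = x ∧ x = g := by
  constructor
  · intro hp
    have hxg : x = g := hg.eq_of_isSelfAdjoint hx hp.isSelfAdjoint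
    subst hxg
    exact ⟨hx.unique (hg.isMoorePenroseInverse_star hx hp.isIdempotentElem) |>.symm, rfl⟩
  · rintro ⟨rfl, rfl⟩
    rw [hg.mul_self_mul_inv]
    exact hx.isStarProjection_mul_inv

end IsGroupInverse

theorem stmt_4 (R : Type*) [Ring R] [StarRing R] (a ap ag : R)
    (h1 : a * ap * a = a) (h2 : ap * a * ap = ap)
    (h3 : star (a * ap) = a * ap) (h4 : star (ap * a) = ap * a)
    (g1 : a * ag * a = a) (g2 : ag * a * ag = ag) (g3 : a * ag = ag * a) :
    (star a = ap ∧ ap = ag) ↔ ((a * a * star a * ag) * (a * a * star a * ag) = (a * a * star a * ag) ∧ star ((a * a * star a * ag)) = (a * a * star a * ag)) :=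
  (IsGroupInverse.isStarProjection_mul_mul_star_mul_iff ⟨g1, g2, g3⟩ ⟨h1, h2, h3, h4⟩).symm.trans
    isStarProjection_iff'
end

section
/- Let R be a *-ring, let a ∈ R be both group invertible and Moore–Penrose invertible, and let x ∈ R be a projection satisfying x = aa⁺xa⁺a. Then a⁺axaa⁺ is a projection. -/
/-!
Since `a a⁺` and `a⁺ a` are projections, `x = (a a⁺) x (a⁺ a)` gives `a a⁺ x = x = x a⁺ a`;
taking adjoints of these identities, with `x` self-adjoint, gives `x a a⁺ = x = a⁺ a x`.
Hence `a⁺ a x a a⁺ = x`, which is a projection.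
-/

section Semigroup

variable {M : Type*} [Semigroup M]

theorem IsIdempotentElem.mul_eq_of_eq_mul_mul {p q x : M} (hp : IsIdempotentElem p)
    (h : x = p * x * q) : p * x = x := by
  rw [h, mul_assoc p x q, hp.mul_self_mul, ← mul_assoc]

theorem IsIdempotentElem.mul_eq_of_eq_mul_mul' {p q x : M} (hq : IsIdempotentElem q)
    (h : x = p * x * q) : x * q = x := by
  rw [h, hq.mul_mul_self]

end Semigroup

section StarMul

variable {M : Type*} [Mul M] [StarMul M]

theorem IsSelfAdjoint.mul_eq_of_mul_eq {p x : M} (hp : IsSelfAdjoint p) (hx : IsSelfAdjoint x)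
    (h : x * p = x) : p * x = x := by
  simpa only [star_mul, hp.star_eq, hx.star_eq] using congrArg star h

theorem IsSelfAdjoint.mul_eq_of_mul_eq' {p x : M} (hp : IsSelfAdjoint p) (hx : IsSelfAdjoint x)
    (h : p * x = x) : x * p = x := by
  simpa only [star_mul, hp.star_eq, hx.star_eq] using congrArg star h

end StarMul

theorem IsStarProjection.mul_mul_eq_of_eq_mul_mul {M : Type*} [Semigroup M] [StarMul M]
    {p q x : M} (hp : IsStarProjection p) (hq : IsStarProjection q) (hx : IsSelfAdjoint x)
    (h : x = p * x * q) : q * x * p = x := by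
  have hpx : p * x = x := hp.isIdempotentElem.mul_eq_of_eq_mul_mul h
  have hxq : x * q = x := hq.isIdempotentElem.mul_eq_of_eq_mul_mul' h
  have hxp : x * p = x := hp.isSelfAdjoint.mul_eq_of_mul_eq' hx hpx
  have hqx : q * x = x := hq.isSelfAdjoint.mul_eq_of_mul_eq hx hxq
  rw [hqx, hxp]

section InnerInverse

variable {M : Type*} [Semigroup M] [Star M] {a b : M}

theorem isStarProjection_mul_of_mul_mul_eq (h : a * b * a = a) (hs : star (a * b) = a * b) :
    IsStarProjection (a * b) :=
  ⟨by rw [IsIdempotentElem, ← mul_assoc, h], hs⟩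

theorem isStarProjection_mul_of_mul_mul_eq' (h : a * b * a = a) (hs : star (b * a) = b * a) :
    IsStarProjection (b * a) :=
  ⟨by rw [IsIdempotentElem, mul_assoc, ← mul_assoc a, h], hs⟩

end InnerInverse

theorem stmt_5_general (R : Type*) [Ring R] [StarRing R] (a ap : R)
    (h1 : a * ap * a = a)
    (h3 : star (a * ap) = a * ap) (h4 : star (ap * a) = ap * a)
    (x : R) (hx : x * x = x ∧ star x = x) (hxa : x = a * ap * x * ap * a) :
    ((ap * a * x * a * ap) * (ap * a * x * a * ap) = (ap * a * x * a * ap) ∧ star ((ap * a * x * a * ap)) = (ap * a * x * a * ap)) := by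
  have hx' : x = a * ap * x * (ap * a) := by rw [← mul_assoc]; exact hxa
  have key : ap * a * x * (a * ap) = x :=
    (isStarProjection_mul_of_mul_mul_eq h1 h3).mul_mul_eq_of_eq_mul_mul
      (isStarProjection_mul_of_mul_mul_eq' h1 h4) hx.2 hx'
  rw [← mul_assoc] at key
  rw [key]
  exact hx

theorem stmt_5 (R : Type*) [Ring R] [StarRing R] (a ap ag : R)
    (h1 : a * ap * a = a) (h2 : ap * a * ap = ap)
    (h3 : star (a * ap) = a * ap) (h4 : star (ap * a) = ap * a)
    (g1 : a * ag * a = a) (g2 : ag * a * ag = ag) (g3 : a * ag = ag * a)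
    (x : R) (hx : x * x = x ∧ star x = x) (hxa : x = a * ap * x * ap * a) :
    ((ap * a * x * a * ap) * (ap * a * x * a * ap) = (ap * a * x * a * ap) ∧ star ((ap * a * x * a * ap)) = (ap * a * x * a * ap)) :=
  stmt_5_general R a ap h1 h3 h4 x hx hxa
end

section
/- Let R be a *-ring and let a ∈ R be both group invertible and Moore–Penrose invertible. Then a is an SEP element if and only if a(a#)*a⁺ is a right (a⁺a²)-idempotent, i.e. (a(a#)*a⁺)² = a(a#)*a⁺ · a⁺a². -/
/-!
Write `a⁺` and `a#` for the two inverses and `x = a (a#)* a⁺`. Since `a⁺ a (a#)* = (a#)*`,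
multiplying `x² = x a⁺ a²` on the left by `a* a* a⁺` collapses it to `a⁺ = a* a⁺ a⁺ a²`.
In particular `a⁺ ∈ R a`, which forces `a` to be EP (`a⁺ = a#`); then `a⁺ a⁺ a² = a⁺ a`,
and the same identity reads `a⁺ = a* a⁺ a = a*`.
-/

section

variable {R : Type*}

def IsRightIdempotent [Mul R] (b e : R) : Prop := e * e = e * b

structure IsMoorePenroseInverse_s8 [Mul R] [Star R] (a b : R) : Prop where
  mul_mul_self : a * b * a = a
  mul_mul_self' : b * a * b = b
  isSelfAdjoint_mul : IsSelfAdjoint (a * b)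
  isSelfAdjoint_mul' : IsSelfAdjoint (b * a)

structure IsGroupInverse_s8 [Mul R] (a c : R) : Prop where
  mul_mul_self : a * c * a = a
  mul_mul_self' : c * a * c = c
  commute : Commute a c

variable [Semigroup R]

namespace IsGroupInverse_s8

variable {a c : R} (h : IsGroupInverse_s8 a c)
include h

theorem mul_self_mul : a * a * c = a := by
  rw [mul_assoc, h.commute.eq, ← mul_assoc, h.mul_mul_self]

theorem mul_mul_self_right : c * a * a = a := by
  rw [← h.commute.eq, h.mul_mul_self]

theorem mul_self_mul' : c * c * a = c := by
  rw [mul_assoc, ← h.commute.eq, ← mul_assoc, h.mul_mul_self']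

theorem star_eq_star_mul_star_mul_star [StarMul R] : star c = star a * (star c * star c) := by
  rw [← star_mul, ← star_mul, h.mul_self_mul']

end IsGroupInverse_s8

namespace IsMoorePenroseInverse_s8

variable [StarMul R] {a b c : R} (h : IsMoorePenroseInverse_s8 a b)
include h

theorem star_mul_mul_self : star a * a * b = star a := by
  calc star a * a * b = star a * star (a * b) := by rw [h.isSelfAdjoint_mul.star_eq, mul_assoc]
    _ = star a := by rw [← star_mul, h.mul_mul_self]

theorem mul_mul_star : b * a * star a = star a := by
  rw [← h.isSelfAdjoint_mul'.star_eq, ← star_mul, ← mul_assoc, h.mul_mul_self]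

theorem eq_star_mul : b = star a * star b * b := by
  calc b = b * a * b := h.mul_mul_self'.symm
    _ = star a * star b * b := by rw [← h.isSelfAdjoint_mul'.star_eq, star_mul]

theorem mul_mul_eq_of_eq_star_mul {y z : R} (hy : y = star a * z) : b * a * y = y := by
  rw [hy, ← mul_assoc, h.mul_mul_star]

theorem eq_of_eq_mul {y : R} (hc : IsGroupInverse_s8 a c) (hy : b = y * a) : b = c := by
  have hstar : star a * a * c = star a := by
    calc star a * a * c = star a * a * b * a * c := by rw [h.star_mul_mul_self]
      _ = star a * a * y * (a * a * c) := by rw [hy]; simp only [mul_assoc]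
      _ = star a * a * b := by rw [hc.mul_self_mul, hy]; simp only [mul_assoc]
      _ = star a := h.star_mul_mul_self
  have hab : a * b = a * c := by
    calc a * b = star b * star a := by rw [← star_mul, h.isSelfAdjoint_mul.star_eq]
      _ = star b * (star a * a * c) := by rw [hstar]
      _ = a * b * a * c := by
        rw [← h.isSelfAdjoint_mul.star_eq, star_mul]; simp only [mul_assoc]
      _ = a * c := by rw [h.mul_mul_self]
  have hsa : IsSelfAdjoint (c * a) := by
    rw [← hc.commute.eq, ← hab]; exact h.isSelfAdjoint_mul
  have hca : c * a = b * a := by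
    calc c * a = star (c * (a * b * a)) := by rw [h.mul_mul_self, hsa.star_eq]
      _ = star (b * a) * star (c * a) := by rw [← star_mul]; simp only [mul_assoc]
      _ = b * (a * c * a) := by
        rw [h.isSelfAdjoint_mul'.star_eq, hsa.star_eq]; simp only [mul_assoc]
      _ = b * a := by rw [hc.mul_mul_self]
  calc b = b * a * b := h.mul_mul_self'.symm
    _ = c * a * c := by rw [← hca, mul_assoc, hab, ← mul_assoc]
    _ = c := hc.mul_mul_self'

theorem eq_star_mul_of_isRightIdempotent (hc : IsGroupInverse_s8 a c)
    (hx : IsRightIdempotent (b * a * a) (a * star c * b)) : b = star a * b * b * a * a := by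
  have hbac : b * a * star c = star c :=
    h.mul_mul_eq_of_eq_star_mul hc.star_eq_star_mul_star_mul_star
  have hcc : star c * star c * b = star c * b * b * a * a := by
    calc star c * star c * b = b * a * star c * (b * a * star c) * b := by rw [hbac]
      _ = b * ((a * star c * b) * (a * star c * b)) := by simp only [mul_assoc]
      _ = b * a * star c * b * b * a * a := by rw [hx]; simp only [mul_assoc]
      _ = star c * b * b * a * a := by rw [hbac]
  have hca : star (c * a) * star a = star a := by
    rw [← star_mul, ← mul_assoc, hc.mul_mul_self]
  calc b = star (c * a) * b := by
        rw [h.eq_star_mul, ← mul_assoc, ← mul_assoc, hca, ← h.eq_star_mul]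
    _ = star a * star a * (star c * star c * b) := by
        conv_lhs => rw [← hc.mul_self_mul']
        simp only [star_mul, mul_assoc]
    _ = star (c * a * a) * b * b * a * a := by
        rw [hcc]; simp only [star_mul, mul_assoc]
    _ = star a * b * b * a * a := by rw [hc.mul_mul_self_right]

theorem star_eq_of_isGroupInverse (hg : IsGroupInverse_s8 a b) (hb : b = star a * b * b * a * a) :
    star a = b := by
  calc star a = star (b * a * a) := by rw [hg.mul_mul_self_right]
    _ = star a * (b * a) := by rw [star_mul, h.isSelfAdjoint_mul'.star_eq]
    _ = star a * (b * b * a) * a := by rw [hg.mul_self_mul']; simp only [mul_assoc]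
    _ = star a * b * b * a * a := by simp only [mul_assoc]
    _ = b := hb.symm

end IsMoorePenroseInverse_s8

end

theorem stmt_8 (R : Type*) [Ring R] [StarRing R] (a ap ag : R)
    (h1 : a * ap * a = a) (h2 : ap * a * ap = ap)
    (h3 : star (a * ap) = a * ap) (h4 : star (ap * a) = ap * a)
    (g1 : a * ag * a = a) (g2 : ag * a * ag = ag) (g3 : a * ag = ag * a) :
    (star a = ap ∧ ap = ag) ↔ (a * star ag * ap) * (a * star ag * ap) = (a * star ag * ap) * (ap * a * a) := by
  have hp : IsMoorePenroseInverse_s8 a ap := ⟨h1, h2, h3, h4⟩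
  have hg : IsGroupInverse_s8 a ag := ⟨g1, g2, g3⟩
  constructor
  · rintro ⟨rfl, rfl⟩
    rw [star_star, hg.mul_self_mul, hg.mul_mul_self_right]
  · intro hx
    have hb := hp.eq_star_mul_of_isRightIdempotent hg hx
    obtain rfl := hp.eq_of_eq_mul hg hb
    exact ⟨hp.star_eq_of_isGroupInverse hg hb, rfl⟩
end

section
/- Let R be a *-ring and let a ∈ R be both group invertible and Moore–Penrose invertible. Then a is an SEP element if and only if a⁺a² is a left ((a⁺)*)-idempotent, i.e. (a⁺a²)² = (a⁺)* · a⁺a². -/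
theorem stmt_11 (R : Type*) [Ring R] [StarRing R] (a ap ag : R)
    (h1 : a * ap * a = a) (h2 : ap * a * ap = ap)
    (h3 : star (a * ap) = a * ap) (h4 : star (ap * a) = ap * a)
    (g1 : a * ag * a = a) (g2 : ag * a * ag = ag) (g3 : a * ag = ag * a) :
    (star a = ap ∧ ap = ag) ↔ (ap * a * a) * (ap * a * a) = star ap * (ap * a * a) := by
  constructor
  · rintro ⟨hp, hg⟩
    have hsg : star a = ag := hp.trans hg
    rw [← hp, star_star, hsg]
    have k : ag * a * a = a := by rw [← g3, g1]
    rw [k]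
  · intro h
    -- prefixed basic identities
    have p1 : ∀ x : R, x * a * ap * a = x * a := fun x => by
      rw [mul_assoc, mul_assoc, ← mul_assoc a ap a, h1]
    have p2 : ∀ x : R, x * ap * a * ap = x * ap := fun x => by
      rw [mul_assoc, mul_assoc, ← mul_assoc ap a ap, h2]
    have pg1 : ∀ x : R, x * a * ag * a = x * a := fun x => by
      rw [mul_assoc, mul_assoc, ← mul_assoc a ag a, g1]
    have pL1 : ∀ x : R, x * a * a * ag = x * a := fun x => by
      rw [mul_assoc (x * a), g3, ← mul_assoc]; exact pg1 x
    have pg3r : ∀ x : R, x * ag * a = x * a * ag := fun x => by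
      rw [mul_assoc, ← g3, ← mul_assoc]
    have L2 : ag * ag * a * a = ag * a := by
      rw [pg3r, g2]
    have s3 : star ap * star a = a * ap := by rw [← star_mul, h3]
    have s4 : star a * star ap = ap * a := by rw [← star_mul, h4]
    have ps3 : ∀ x : R, x * star ap * star a = x * a * ap := fun x => by
      rw [mul_assoc, s3, ← mul_assoc]
    have ps4 : ∀ x : R, x * star a * star ap = x * ap * a := fun x => by
      rw [mul_assoc, s4, ← mul_assoc]
    simp only [← mul_assoc] at h
    -- h : ap*a*a*ap*a*a = star ap*ap*a*a
    have e3 : ap * a * a * ap * a = star ap * ap * a := by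
      have t := congrArg (· * ag) h
      rw [pL1, pL1] at t
      exact t
    have e4 : star a * a * ap * ap * a = ap := by
      have t := congrArg star e3
      simp only [star_mul, star_star] at t
      simp only [← mul_assoc] at t
      rw [ps3, ps4, s4, h2] at t
      exact t
    have e5 : a * ap * ap * a = star ap * ap := by
      have t := congrArg (star ap * ·) e4
      simp only [← mul_assoc] at t
      rw [s3, h1] at t
      exact t
    have e6 : ap * a * a * ap = star ap * ap := by
      have t := congrArg star e5
      simp only [star_mul, star_star] at t
      simp only [← mul_assoc] at t
      rw [s4, ps3] at t
      exact t
    have e6' : ap * a * a * ap = a * ap * ap * a := e6.trans e5.symm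
    have e8 : a * a * ap = a * a * ap * ap * a := by
      have t := congrArg (a * ·) e6
      simp only [← mul_assoc] at t
      rw [h1] at t
      have u := congrArg (a * ·) e5
      simp only [← mul_assoc] at u
      exact t.trans u.symm
    have e9 : ag * a * ap = ag * a * ap * ap * a := by
      have t := congrArg (fun y => ag * (ag * y)) e8
      simp only [← mul_assoc] at t
      rw [L2] at t
      exact t
    have e10 : a * a = a * a * ap * ap * a * a := by
      have t := congrArg (· * a) e8
      rw [p1] at t
      exact t
    have e11 : ag = ag * a * ap * ap * a := by
      have t := congrArg (fun y => ag * (ag * y)) e10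
      simp only [← mul_assoc] at t
      rw [L2] at t
      have u := congrArg (· * ag) t
      rw [g2, pL1] at u
      exact u
    have e12 : ag = ag * a * ap := e11.trans e9.symm
    have e13 : a * ag = a * ap := by
      have t := congrArg (a * ·) e12
      simp only [← mul_assoc] at t
      rw [g1] at t
      exact t
    have e14 : ag * a = a * ap := by rw [← g3]; exact e13
    have e15 : ag = a * ap * ap := by rw [e12, e14]
    have e16 : a * ap = a * a * ap * ap := by
      rw [← e13, e15]
      simp only [← mul_assoc]
    have e16p : ∀ x : R, x * a * ap = x * a * a * ap * ap := fun x => by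
      rw [mul_assoc, e16]
      simp only [← mul_assoc]
    have e17 : ap = a * ap * ap := by
      conv_lhs => rw [← h2]
      rw [e16p ap, e6', p2]
    have e_ep : ap = ag := e17.trans e15.symm
    have e_comm : a * ap = ap * a := by rw [e_ep]; exact g3
    have pcomm : ∀ x : R, x * ap * a = x * a * ap := fun x => by
      rw [mul_assoc, ← e_comm, ← mul_assoc]
    have e18 : star ap * ap = ap * a := by
      rw [← e5, ← e17]
    have e19 : ap = star a * a * ap := by
      have t := congrArg (star a * ·) e18
      simp only [← mul_assoc] at t
      rw [s4, h2, pcomm] at t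
      exact t
    have e20 : star a * a * ap = star a := by
      have t := congrArg star h1
      simp only [star_mul] at t
      simp only [← mul_assoc] at t
      rw [ps3] at t
      exact t
    exact ⟨e20.symm.trans e19.symm, e_ep⟩
end

section
/- Let R be a *-ring and let a ∈ R be both group invertible and Moore–Penrose invertible. Then a is an SEP element if and only if (a(a#)*a⁺)² = (a⁺a²)² and (a(a#)*a⁺)³ = (a⁺a²)³. -/
/-!
Write `x = a (a#)* a⁺` and `y = a⁺a²`, so that `y² = a⁺a³`. As `x² ∈ aR`, the equation `x² = y²`
puts `a⁺a³` in `aR`; cancelling `a³` against `(a#)²` gives `a⁺ ∈ aR`, and for a group invertible `a`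
this forces `aa⁺ = a⁺a`. Hence `a` is EP, `a⁺ = a#` and `y = a`. Then `e = a²(a⁺)² = aa⁺` is a right
unit for both `x` and `a`, so `x = x³(a⁺)² = a³(a⁺)² = a`, and compressing by `aa⁺` gives
`(a⁺)* = a⁺xa = a`.
-/

section Monoid

variable {R : Type*} [Monoid R]

theorem eq_of_sq_eq_of_pow_three_eq {u a e : R} (h2 : u ^ 2 = a ^ 2) (h3 : u ^ 3 = a ^ 3)
    (hu : u * (a ^ 2 * e) = u) (ha : a * (a ^ 2 * e) = a) : u = a :=
  calc u = u * (a ^ 2 * e) := hu.symm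
    _ = u ^ 3 * e := by rw [← h2, ← mul_assoc, ← pow_succ']
    _ = a := by rw [h3, pow_succ', mul_assoc, ha]

structure IsGroupInverse_s12 (a b : R) : Prop where
  mul_inv_mul : a * b * a = a
  inv_mul_inv : b * a * b = b
  commute : Commute a b

namespace IsGroupInverse_s12

variable {a b c : R}

theorem sq_mul (h : IsGroupInverse_s12 a b) : a ^ 2 * b = a := by
  rw [sq, mul_assoc, h.commute.eq, ← mul_assoc, h.mul_inv_mul]

theorem pow_three_mul_sq (h : IsGroupInverse_s12 a b) : a ^ 3 * b ^ 2 = a := by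
  rw [pow_succ', sq b, ← mul_assoc, mul_assoc a, h.sq_mul, ← sq, h.sq_mul]

theorem unique (hb : IsGroupInverse_s12 a b) (hc : IsGroupInverse_s12 a c) : b = c := by
  have hab : a * b = a * c :=
    calc a * b = a * c * a * b := by rw [hc.mul_inv_mul]
      _ = c * (a ^ 2 * b) := by rw [hc.commute.eq]; simp only [sq, mul_assoc]
      _ = a * c := by rw [hb.sq_mul, hc.commute.eq]
  calc b = b * a * b := hb.inv_mul_inv.symm
    _ = a * c * c := by rw [mul_assoc, hab, ← mul_assoc, ← hb.commute.eq, hab]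
    _ = c := by rw [hc.commute.eq, hc.inv_mul_inv]

end IsGroupInverse_s12

end Monoid

section StarMonoid

variable {R : Type*} [Monoid R] [StarMul R]

structure IsMoorePenroseInverse_s12 (a b : R) : Prop where
  mul_inv_mul : a * b * a = a
  inv_mul_inv : b * a * b = b
  star_mul_inv : star (a * b) = a * b
  star_inv_mul : star (b * a) = b * a

namespace IsMoorePenroseInverse_s12

variable {a b c : R}

theorem isGroupInverse_of_commute (h : IsMoorePenroseInverse_s12 a b) (hab : Commute a b) :
    IsGroupInverse_s12 a b :=
  ⟨h.mul_inv_mul, h.inv_mul_inv, hab⟩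

theorem mul_mul_eq_of_sq_eq_mul (h : IsMoorePenroseInverse_s12 a b) (hc : IsGroupInverse_s12 a c) {z : R}
    (hz : (b * a * a) ^ 2 = a * z) : a * b * b = b := by
  have hcube : b * a ^ 3 = a * z := by
    rw [← hz, sq, show b * a * a * (b * a * a) = b * a * (a * b * a) * a by simp only [mul_assoc],
      h.mul_inv_mul, pow_three]
    simp only [mul_assoc]
  have hq : a * b * (b * a) = b * a := by
    have := congrArg (· * c ^ 2) (show a * b * (b * a ^ 3) = b * a ^ 3 by
      rw [hcube, ← mul_assoc, h.mul_inv_mul])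
    simpa only [mul_assoc, hc.pow_three_mul_sq] using this
  calc a * b * b = a * b * (b * a) * b := by rw [mul_assoc (a * b), h.inv_mul_inv]
    _ = b := by rw [hq, h.inv_mul_inv]

theorem commute_of_isGroupInverse (h : IsMoorePenroseInverse_s12 a b) (hc : IsGroupInverse_s12 a c)
    (hb : a * b * b = b) : Commute a b := by
  have hq : b * a = b * a * (a * b) :=
    calc b * a = star (b * a) := h.star_inv_mul.symm
      _ = star (a * b * (b * a)) := by rw [← mul_assoc, hb]
      _ = b * a * (a * b) := by rw [star_mul, h.star_inv_mul, h.star_mul_inv]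
  have hcb : c * a * b = b :=
    calc c * a * b = a * c * (a * b * b) := by rw [hb, hc.commute.eq]
      _ = b := by rw [← mul_assoc, ← mul_assoc, hc.mul_inv_mul, hb]
  have hba : b * a = c * a := by
    rw [← hcb, mul_assoc c a b, mul_assoc c, h.mul_inv_mul]
  have hbaa : b * a * a = a := by rw [hba, ← hc.commute.eq, hc.mul_inv_mul]
  calc a * b = b * a * a * b := by rw [hbaa]
    _ = b * a := by rw [mul_assoc (b * a), ← hq]

theorem star_eq_of_commute (h : IsMoorePenroseInverse_s12 a b) (hab : Commute a b)
    (h2 : (a * star b * b) ^ 2 = a ^ 2) (h3 : (a * star b * b) ^ 3 = a ^ 3) : star a = b := by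
  have hp : a ^ 2 * b ^ 2 = a * b := by
    rw [← hab.mul_pow, sq, mul_assoc, ← mul_assoc b, h.inv_mul_inv]
  have hx : a * star b * b = a := by
    refine eq_of_sq_eq_of_pow_three_eq (e := b ^ 2) h2 h3 ?_ ?_
    · rw [hp, mul_assoc, mul_assoc, ← mul_assoc b, h.inv_mul_inv, ← mul_assoc]
    · rw [hp, hab.eq, ← mul_assoc, h.mul_inv_mul]
  have hpu : a * b * star b = star b := by
    rw [← h.star_mul_inv, ← star_mul, ← mul_assoc, h.inv_mul_inv]
  have hup : star b * (b * a) = star b := by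
    rw [← h.star_inv_mul, ← star_mul, h.inv_mul_inv]
  have hu : star b = a :=
    calc star b = b * (a * star b * b) * a := by
          rw [← mul_assoc, ← mul_assoc, ← hab.eq, hpu, mul_assoc, hup]
      _ = a := by rw [hx, ← hab.eq, h.mul_inv_mul]
  rw [← hu, star_star]

end IsMoorePenroseInverse_s12

end StarMonoid

theorem stmt_12 (R : Type*) [Ring R] [StarRing R] (a ap ag : R)
    (h1 : a * ap * a = a) (h2 : ap * a * ap = ap)
    (h3 : star (a * ap) = a * ap) (h4 : star (ap * a) = ap * a)
    (g1 : a * ag * a = a) (g2 : ag * a * ag = ag) (g3 : a * ag = ag * a) :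
    (star a = ap ∧ ap = ag) ↔ ((a * star ag * ap) * (a * star ag * ap) = (ap * a * a) * (ap * a * a) ∧ (a * star ag * ap) * (a * star ag * ap) * (a * star ag * ap) = (ap * a * a) * (ap * a * a) * (ap * a * a)) := by
  have hmp : IsMoorePenroseInverse_s12 a ap := ⟨h1, h2, h3, h4⟩
  have hg : IsGroupInverse_s12 a ag := ⟨g1, g2, g3⟩
  constructor
  · rintro ⟨hstar, rfl⟩
    have hx : a * star ap * ap = ap * a * a := by
      rw [show star ap = a by rw [← hstar, star_star], mul_assoc, g3, ← mul_assoc, g3]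
    exact ⟨by rw [hx], by rw [hx]⟩
  · rintro ⟨hsq, hcube⟩
    have hcomm : Commute a ap := hmp.commute_of_isGroupInverse hg <|
      hmp.mul_mul_eq_of_sq_eq_mul hg (z := star ag * ap * (a * star ag * ap))
        (by rw [sq, ← hsq]; simp only [mul_assoc])
    obtain rfl : ap = ag := (hmp.isGroupInverse_of_commute hcomm).unique hg
    have hy : ap * a * a = a := by rw [← hcomm.eq, h1]
    rw [hy, ← sq, ← sq] at hsq
    rw [hy, ← pow_three', ← pow_three'] at hcube
    exact ⟨hmp.star_eq_of_commute hcomm hsq hcube, rfl⟩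
end

section
/- Let R be a *-ring and let a ∈ R be both group invertible and Moore–Penrose invertible. Then a is an SEP element if and only if a · a(a#)*a⁺ = a · a⁺a² (i.e. a(a#)*a⁺ and a⁺a² are left a-equivalent). -/
/-!
If `a (a#)* a⁺` and `a⁺ a²` are left `a`-equivalent then `a² (a#)* a⁺ = a²`, and
multiplying on the right by `a a⁺` gives `a³ a⁺ = a²`. Cancelling `a²` against `(a#)²` turns this
into `a# a = a a⁺`, so `a# a` is hermitian, `a#` satisfies the Penrose equations and `a⁺ = a#`.
The same cancellation applied to `a² (a#)* a# = a²` gives `e (a#)* a# = e`, hence `e (a#)* e = a`,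
for the hermitian idempotent `e = a# a`; but `e (a#)* e = (e a# e)* = (a#)*`, so `a* = a#`.
-/

structure IsMoorePenroseInverse_s15 {R : Type*} [Mul R] [Star R] (a b : R) : Prop where
  mul_mul_self : a * b * a = a
  self_mul_mul : b * a * b = b
  star_mul_right : star (a * b) = a * b
  star_mul_left : star (b * a) = b * a

structure IsGroupInverse_s15 {M : Type*} [Mul M] (a b : M) : Prop where
  mul_mul_self : a * b * a = a
  self_mul_mul : b * a * b = b
  commute : a * b = b * a

section MoorePenrose

variable {R : Type*} [Semigroup R] [StarMul R] {a b c : R}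

theorem IsMoorePenroseInverse_s15.mul_right_eq (hb : IsMoorePenroseInverse_s15 a b)
    (hc : IsMoorePenroseInverse_s15 a c) : a * b = a * c :=
  calc a * b = star (a * c * (a * b)) := by
        rw [← mul_assoc, hc.mul_mul_self, hb.star_mul_right]
    _ = a * b * (a * c) := by rw [star_mul, hb.star_mul_right, hc.star_mul_right]
    _ = a * c := by rw [← mul_assoc, hb.mul_mul_self]

theorem IsMoorePenroseInverse_s15.mul_left_eq (hb : IsMoorePenroseInverse_s15 a b)
    (hc : IsMoorePenroseInverse_s15 a c) : b * a = c * a :=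
  calc b * a = star (b * a * (c * a)) := by
        rw [← mul_assoc, mul_assoc b a c, mul_assoc b (a * c) a, hc.mul_mul_self,
          hb.star_mul_left]
    _ = c * a * (b * a) := by rw [star_mul, hb.star_mul_left, hc.star_mul_left]
    _ = c * a := by rw [← mul_assoc, mul_assoc c a b, mul_assoc c (a * b) a, hb.mul_mul_self]

theorem IsMoorePenroseInverse_s15.unique (hb : IsMoorePenroseInverse_s15 a b)
    (hc : IsMoorePenroseInverse_s15 a c) : b = c :=
  calc b = b * a * b := hb.self_mul_mul.symm
    _ = c * a * c := by rw [hb.mul_left_eq hc, mul_assoc, hb.mul_right_eq hc, ← mul_assoc]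
    _ = c := hc.self_mul_mul

end MoorePenrose

namespace IsGroupInverse_s15

variable {M : Type*} [Semigroup M] {a b : M}

theorem mul_mul_self' (hb : IsGroupInverse_s15 a b) : b * a * a = a := by
  rw [← hb.commute, hb.mul_mul_self]

theorem mul_mul_mul_self (hb : IsGroupInverse_s15 a b) : b * a * (b * a) = b * a := by
  rw [← mul_assoc, hb.self_mul_mul]

theorem sq_mul_mul_self (hb : IsGroupInverse_s15 a b) : a * a * (b * a) = a * a := by
  rw [← mul_assoc, mul_assoc a a b, mul_assoc a (a * b) a, hb.mul_mul_self]

/-- `a²` can be cancelled on the left down to `a# a`, since `(a#)² a² = a# a`. -/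
theorem mul_left_cancel_sq (hb : IsGroupInverse_s15 a b) {x y : M}
    (h : a * a * x = a * a * y) : b * a * x = b * a * y := by
  have hsq : b * b * (a * a) = b * a := by
    rw [← mul_assoc, mul_assoc b b a, mul_assoc b (b * a) a, hb.mul_mul_self']
  calc b * a * x = b * b * (a * a * x) := by rw [← mul_assoc, hsq]
    _ = b * b * (a * a * y) := by rw [h]
    _ = b * a * y := by rw [← mul_assoc, hsq]

theorem mul_eq_of_sq_mul_eq (hb : IsGroupInverse_s15 a b) {c : M}
    (h : a * a * (a * c) = a * a) : b * a = a * c := by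
  have := hb.mul_left_cancel_sq (h.trans hb.sq_mul_mul_self.symm)
  rwa [hb.mul_mul_mul_self, ← mul_assoc, hb.mul_mul_self', eq_comm] at this

theorem isMoorePenroseInverse_s15 [StarMul M] (hb : IsGroupInverse_s15 a b)
    (h : star (b * a) = b * a) : IsMoorePenroseInverse_s15 a b :=
  ⟨hb.mul_mul_self, hb.self_mul_mul, hb.commute ▸ h, h⟩

end IsGroupInverse_s15

section EP

variable {R : Type*} [Semigroup R] [StarMul R] {a p b : R}

theorem IsGroupInverse_s15.eq_of_sq_mul_mul_eq (hp : IsMoorePenroseInverse_s15 a p)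
    (hb : IsGroupInverse_s15 a b) {x : R} (h : a * a * (x * p) = a * a) : p = b := by
  have hcube : a * a * (a * p) = a * a :=
    calc a * a * (a * p) = a * a * (x * p) * (a * p) := by rw [h]
      _ = a * a * (x * p) := by
        rw [mul_assoc, mul_assoc x, ← mul_assoc p a p, hp.self_mul_mul]
      _ = a * a := h
  have hherm : star (b * a) = b * a := by
    rw [hb.mul_eq_of_sq_mul_eq hcube, hp.star_mul_right]
  exact hp.unique (hb.isMoorePenroseInverse_s15 hherm)

theorem IsGroupInverse_s15.star_eq_of_sq_mul_star_mul_eq (hp : IsMoorePenroseInverse_s15 a b)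
    (hb : IsGroupInverse_s15 a b) (h : a * a * (star b * b) = a * a) : star a = b := by
  have hcancel : b * a * (star b * b) = b * a := by
    rw [hb.mul_left_cancel_sq (h.trans hb.sq_mul_mul_self.symm), hb.mul_mul_mul_self]
  have hconj : b * a * b * (b * a) = b := by
    rw [hb.self_mul_mul, ← hb.commute, ← mul_assoc, hb.self_mul_mul]
  have hstar : star b = a :=
    calc star b = star (b * a * b * (b * a)) := by rw [hconj]
      _ = b * a * (star b * (b * a)) := by
        rw [star_mul (b * a * b), star_mul (b * a) b, hp.star_mul_left]
      _ = a := by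
        rw [← mul_assoc (star b) b a, ← mul_assoc, hcancel, hb.mul_mul_self']
  rw [← hstar, star_star]

end EP

theorem stmt_15 (R : Type*) [Ring R] [StarRing R] (a ap ag : R)
    (h1 : a * ap * a = a) (h2 : ap * a * ap = ap)
    (h3 : star (a * ap) = a * ap) (h4 : star (ap * a) = ap * a)
    (g1 : a * ag * a = a) (g2 : ag * a * ag = ag) (g3 : a * ag = ag * a) :
    (star a = ap ∧ ap = ag) ↔ a * (a * star ag * ap) = a * (ap * a * a) := by
  have hp : IsMoorePenroseInverse_s15 a ap := ⟨h1, h2, h3, h4⟩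
  have hg : IsGroupInverse_s15 a ag := ⟨g1, g2, g3⟩
  have hsq : a * (ap * a * a) = a * a := by rw [← mul_assoc, ← mul_assoc, h1]
  rw [hsq]
  constructor
  · rintro ⟨rfl, rfl⟩
    rw [star_star, mul_assoc a a, g3, ← mul_assoc a (star a) a, g1]
  · intro h
    have h' : a * a * (star ag * ap) = a * a := by simpa only [mul_assoc] using h
    obtain rfl := hg.eq_of_sq_mul_mul_eq hp h'
    exact ⟨hg.star_eq_of_sq_mul_star_mul_eq hp h', rfl⟩
end

section
/- Let R be a *-ring and let a ∈ R be both group invertible and Moore–Penrose invertible. Then a is an SEP element if and only if a⁺a² · a(a#)*a⁺ = a⁺a² · a⁺a² (i.e. a(a#)*a⁺ and a⁺a² are left (a⁺a²)-equivalent). -/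
theorem stmt_17 (R : Type*) [Ring R] [StarRing R] (a ap ag : R)
    (h1 : a * ap * a = a) (h2 : ap * a * ap = ap)
    (h3 : star (a * ap) = a * ap) (h4 : star (ap * a) = ap * a)
    (g1 : a * ag * a = a) (g2 : ag * a * ag = ag) (g3 : a * ag = ag * a) :
    (star a = ap ∧ ap = ag) ↔ (ap * a * a) * (a * star ag * ap) = (ap * a * a) * (ap * a * a) := by
  have gaa : ag * a * a = a := by rw [← g3, g1]
  constructor
  · rintro ⟨hs, he⟩
    have hsg : star ag = a := by rw [← he, ← hs, star_star]
    have comm : a * ap = ap * a := by rw [he]; exact g3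
    have C : ∀ x : R, a * (ap * x) = ap * (a * x) := fun x => by
      rw [← mul_assoc, comm, mul_assoc]
    rw [hsg]
    simp only [mul_assoc, comm, C]
  · intro h
    -- e1 : a³ (ag)* ap = a³
    have e1 : a * a * a * star ag * ap = a * a * a := by
      have t := congrArg (fun x => a * x) h
      simp only [← mul_assoc] at t
      rw [h1] at t
      rw [mul_assoc a a ap, mul_assoc a (a * ap) a, h1] at t
      exact t
    -- e2 : a (ag)* ap = a
    have e2 : a * star ag * ap = a := by
      have t := congrArg (fun x => ag * (ag * x)) e1
      simp only [← mul_assoc] at t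
      rw [mul_assoc ag ag a, mul_assoc ag (ag * a) a, gaa, gaa] at t
      exact t
    -- e7 : a² ap = a
    have e7 : a * a * ap = a := by
      calc a * a * ap = a * star ag * ap * a * ap := by rw [e2]
        _ = a * star ag * (ap * a * ap) := by
            rw [mul_assoc (a * star ag) ap a, mul_assoc (a * star ag) (ap * a) ap]
        _ = a * star ag * ap := by rw [h2]
        _ = a := e2
    -- e8 : a ap = ag a
    have e8 : a * ap = ag * a := by
      have t := congrArg (fun x => ag * x) e7
      simp only [← mul_assoc] at t
      rw [gaa] at t
      exact t
    have sagA : star (ag * a) = ag * a := by rw [← e8]; exact h3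
    -- ap a = ag a
    have t1 : ap * a = ap * a * (ag * a) := by
      rw [← mul_assoc, mul_assoc ap a ag, mul_assoc ap (a * ag) a, g1]
    have epa : ap * a = ag * a := by
      calc ap * a = star (ap * a) := h4.symm
        _ = star (ap * a * (ag * a)) := by rw [← t1]
        _ = star (ag * a) * star (ap * a) := star_mul _ _
        _ = ag * a * (ap * a) := by rw [h4, sagA]
        _ = ag * a := by rw [mul_assoc ag a (ap * a), ← mul_assoc a ap a, h1]
    -- ap = ag
    have hpg : ap = ag := by
      calc ap = ap * a * ap := h2.symm
        _ = ag * a * ap := by rw [epa]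
        _ = ag * (a * ap) := mul_assoc _ _ _
        _ = ag * (ag * a) := by rw [e8]
        _ = ag * (a * ag) := by rw [g3]
        _ = ag := by rw [← mul_assoc, g2]
    rw [← hpg] at e2
    -- e10 : ap* ap a* = a*
    have e10 : star ap * (ap * star a) = star a := by
      have t := congrArg star e2
      simp only [star_mul, star_star, mul_assoc] at t
      exact t
    -- e11 : ap a* = a* a*
    have e11 : ap * star a = star a * star a := by
      have t := congrArg (fun x => star a * x) e10
      simp only [← mul_assoc] at t
      have saap : star a * star ap = ap * a := by rw [← star_mul, h4]
      rw [saap, h2] at t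
      exact t
    -- e12 : a ap* = a a
    have e12 : a * star ap = a * a := by
      have t := congrArg star e11
      simp only [star_mul, star_star] at t
      exact t
    -- e13 : a a a* = a
    have e13 : a * a * star a = a := by
      have t := congrArg (fun x => x * star a) e12
      rw [mul_assoc a (star ap) (star a)] at t
      have sapa : star ap * star a = a * ap := by rw [← star_mul, h3]
      rw [sapa, ← mul_assoc, e7] at t
      exact t.symm
    -- e14 : a a* = a ap
    have e14 : a * star a = a * ap := by
      have t := congrArg (fun x => ag * x) e13
      simp only [← mul_assoc] at t
      rw [gaa] at t
      exact t.trans e8.symm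
    -- k0 : ap a a* = a*
    have k0 : ap * a * star a = star a := by
      apply star_injective
      rw [star_mul, star_star, h4, ← mul_assoc, h1]
    have hfin : star a = ap := by
      calc star a = ap * a * star a := k0.symm
        _ = ap * (a * star a) := mul_assoc _ _ _
        _ = ap * (a * ap) := by rw [e14]
        _ = ap * a * ap := (mul_assoc _ _ _).symm
        _ = ap := h2
    exact ⟨hfin, hpg⟩
end
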